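/- Let A be an n×n Hermitian matrix of rank r ≤ n with eigenvalues ordered λ₁ ≥ ⋯ ≥ λ_r and λ_{r+1} = ⋯ = λ_n = 0, and let E be Hermitian. If k = ‖(A^{1/2})⁺ E (A^{1/2})⁺‖₂ ≤ 1, then for every i ∈ {1,…,r}: λ_i(A+E) ≥ λ_i − k|λ_i|, where eigenvalues of A+E are in decreasing order. -/

import Mathlib

open Matrix
open scoped ComplexOrder

/-- The spectral norm (operator 2-norm) of a complex matrix. -/
noncomputable def specNorm {m n : Type*} [Fintype m] [Fintype n] [DecidableEq n]
    (A : Matrix m n ℂ) : ℝ :=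
  ‖LinearMap.toContinuousLinearMap (Matrix.toEuclideanLin A)‖

/-- `B` is the Moore–Penrose pseudoinverse of `A` (the four Penrose conditions). -/
def IsMP {m n : Type*} [Fintype m] [Fintype n]
    (A : Matrix m n ℂ) (B : Matrix n m ℂ) : Prop :=
  A * B * A = A ∧ B * A * B = B ∧ (A * B)ᴴ = A * B ∧ (B * A)ᴴ = B * A

namespace Stmt1Aux
variable {n : ℕ}

lemma dot_star_self (v : Fin n → ℂ) :
    star v ⬝ᵥ v = ((∑ j, ‖v j‖ ^ 2 : ℝ) : ℂ) := by
  push_cast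
  simp only [dotProduct, Pi.star_apply]
  refine Finset.sum_congr rfl fun j _ => ?_
  rw [RCLike.star_def, mul_comm, Complex.mul_conj, Complex.normSq_eq_norm_sq]
  push_cast
  ring

lemma specNorm_bound (M : Matrix (Fin n) (Fin n) ℂ) (y z : Fin n → ℂ) :
    ‖star y ⬝ᵥ (M *ᵥ z)‖ ≤
      specNorm M * (Real.sqrt (∑ j, ‖y j‖ ^ 2) * Real.sqrt (∑ j, ‖z j‖ ^ 2)) := by
  set Y : EuclideanSpace ℂ (Fin n) := (WithLp.equiv 2 (Fin n → ℂ)).symm y with hY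
  set Z : EuclideanSpace ℂ (Fin n) := (WithLp.equiv 2 (Fin n → ℂ)).symm z with hZ
  have h1 : star y ⬝ᵥ (M *ᵥ z) = (inner ℂ Y (Matrix.toEuclideanLin M Z) : ℂ) := by
    rw [dotProduct_comm]; rfl
  have hYn : ‖Y‖ = Real.sqrt (∑ j, ‖y j‖ ^ 2) := by
    rw [EuclideanSpace.norm_eq]; rfl
  have hZn : ‖Z‖ = Real.sqrt (∑ j, ‖z j‖ ^ 2) := by
    rw [EuclideanSpace.norm_eq]; rfl
  calc ‖star y ⬝ᵥ (M *ᵥ z)‖ = ‖(inner ℂ Y (Matrix.toEuclideanLin M Z) : ℂ)‖ := by rw [h1]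
    _ ≤ ‖Y‖ * ‖Matrix.toEuclideanLin M Z‖ := norm_inner_le_norm _ _
    _ ≤ ‖Y‖ * (specNorm M * ‖Z‖) := by
        refine mul_le_mul_of_nonneg_left ?_ (norm_nonneg _)
        have h2 : Matrix.toEuclideanLin M Z
            = (LinearMap.toContinuousLinearMap (Matrix.toEuclideanLin M)) Z := rfl
        rw [h2]
        exact (LinearMap.toContinuousLinearMap (Matrix.toEuclideanLin M)).le_opNorm Z
    _ = specNorm M * (Real.sqrt (∑ j, ‖y j‖ ^ 2) * Real.sqrt (∑ j, ‖z j‖ ^ 2)) := by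
        rw [hYn, hZn]; ring

lemma mp_unique (S B C : Matrix (Fin n) (Fin n) ℂ)
    (hB : IsMP S B) (hC : IsMP S C) : B = C := by
  obtain ⟨b1, b2, b3, b4⟩ := hB
  obtain ⟨c1, c2, c3, c4⟩ := hC
  have e1 : Sᴴ = Sᴴ * Cᴴ * Sᴴ := by
    conv_lhs => rw [← c1]
    simp only [conjTranspose_mul, mul_assoc]
  have hSB : S * B = S * C := by
    calc S * B = (S * B)ᴴ := b3.symm
      _ = Bᴴ * Sᴴ := by rw [conjTranspose_mul]
      _ = Bᴴ * (Sᴴ * Cᴴ * Sᴴ) := by conv_lhs => rw [e1]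
      _ = (Bᴴ * Sᴴ) * (Cᴴ * Sᴴ) := by noncomm_ring
      _ = (S * B)ᴴ * (S * C)ᴴ := by rw [conjTranspose_mul, conjTranspose_mul]
      _ = (S * B) * (S * C) := by rw [b3, c3]
      _ = (S * B * S) * C := by noncomm_ring
      _ = S * C := by rw [b1]
  have hBS : B * S = C * S := by
    calc B * S = (B * S)ᴴ := b4.symm
      _ = Sᴴ * Bᴴ := by rw [conjTranspose_mul]
      _ = (Sᴴ * Cᴴ * Sᴴ) * Bᴴ := by conv_lhs => rw [e1]
      _ = (Sᴴ * Cᴴ) * (Sᴴ * Bᴴ) := by noncomm_ring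
      _ = (C * S)ᴴ * (B * S)ᴴ := by rw [conjTranspose_mul, conjTranspose_mul]
      _ = (C * S) * (B * S) := by rw [b4, c4]
      _ = C * (S * B * S) := by noncomm_ring
      _ = C * S := by rw [b1]
  calc B = B * S * B := b2.symm
    _ = B * (S * C) := by rw [mul_assoc, hSB]
    _ = (B * S) * C := by rw [mul_assoc]
    _ = (C * S) * C := by rw [hBS]
    _ = C := by rw [c2]

lemma isMP_diag {V : Matrix (Fin n) (Fin n) ℂ} (hV1 : Vᴴ * V = 1) (s : Fin n → ℂ) :
    IsMP (V * diagonal s * Vᴴ) (V * diagonal (fun j => (s j)⁻¹) * Vᴴ) := by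
  have hcol : ∀ X : Matrix (Fin n) (Fin n) ℂ, Vᴴ * (V * X) = X := fun X => by
    rw [← mul_assoc, hV1, one_mul]
  have key : ∀ D1 D2 : Matrix (Fin n) (Fin n) ℂ,
      (V * D1 * Vᴴ) * (V * D2 * Vᴴ) = V * (D1 * D2) * Vᴴ := by
    intro D1 D2; simp only [mul_assoc, hcol]
  have hercol : ∀ D : Matrix (Fin n) (Fin n) ℂ, (V * D * Vᴴ)ᴴ = V * Dᴴ * Vᴴ := by
    intro D
    simp only [conjTranspose_mul, conjTranspose_conjTranspose, mul_assoc]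
  refine ⟨?_, ?_, ?_, ?_⟩
  · rw [key, key, diagonal_mul_diagonal, diagonal_mul_diagonal]
    have h1 : (fun i => s i * (s i)⁻¹ * s i) = s := by
      funext j
      by_cases h : s j = 0
      · simp [h]
      · rw [mul_inv_cancel₀ h, one_mul]
    rw [h1]
  · rw [key, key, diagonal_mul_diagonal, diagonal_mul_diagonal]
    have h1 : (fun i => (s i)⁻¹ * s i * (s i)⁻¹) = fun j => (s j)⁻¹ := by
      funext j
      by_cases h : s j = 0
      · simp [h]
      · rw [inv_mul_cancel₀ h, one_mul]
    rw [h1]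
  · rw [key, diagonal_mul_diagonal, hercol, diagonal_conjTranspose]
    have h1 : (star fun i => s i * (s i)⁻¹) = fun i => s i * (s i)⁻¹ := by
      funext j
      simp only [Pi.star_apply]
      by_cases h : s j = 0
      · simp [h]
      · rw [mul_inv_cancel₀ h]; simp
    rw [h1]
  · rw [key, diagonal_mul_diagonal, hercol, diagonal_conjTranspose]
    have h1 : (star fun i => (s i)⁻¹ * s i) = fun i => (s i)⁻¹ * s i := by
      funext j
      simp only [Pi.star_apply]
      by_cases h : s j = 0
      · simp [h]
      · rw [inv_mul_cancel₀ h]; simp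
    rw [h1]

lemma sq_sqrt_c (x : ℝ) : ((x:ℂ) ^ ((1:ℂ)/2)) * ((x:ℂ) ^ ((1:ℂ)/2)) = (x:ℂ) := by
  by_cases h : (x:ℂ) = 0
  · rw [h, Complex.zero_cpow (by norm_num)]; simp
  · rw [← Complex.cpow_add _ _ h, show (1:ℂ)/2 + 1/2 = 1 by norm_num, Complex.cpow_one]

lemma sqrt_c_eq_zero_iff (x : ℝ) : ((x:ℂ) ^ ((1:ℂ)/2)) = 0 ↔ x = 0 := by
  constructor
  · intro h
    have := sq_sqrt_c x
    rw [h, mul_zero] at this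
    exact_mod_cast this.symm
  · intro h
    rw [h]
    push_cast
    rw [Complex.zero_cpow (by norm_num)]

lemma conj_sqrt (x : ℝ) : ∃ ε : ℝ, (ε = 1 ∨ ε = -1) ∧
    (starRingEnd ℂ) ((x:ℂ) ^ ((1:ℂ)/2)) = (ε:ℂ) * ((x:ℂ) ^ ((1:ℂ)/2)) := by
  set s := (x:ℂ) ^ ((1:ℂ)/2) with hs
  have h2 : (starRingEnd ℂ) s * (starRingEnd ℂ) s = s * s := by
    rw [← _root_.map_mul]
    rw [hs, sq_sqrt_c, Complex.conj_ofReal, ← sq_sqrt_c]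
  rcases mul_self_eq_mul_self_iff.mp h2 with h3 | h3
  · exact ⟨1, Or.inl rfl, by rw [h3]; simp⟩
  · exact ⟨-1, Or.inr rfl, by rw [h3]; push_cast; ring⟩

lemma norm_sqrt_sq (x : ℝ) (ε : ℝ) (hε : ε = 1 ∨ ε = -1)
    (hconj : (starRingEnd ℂ) ((x:ℂ) ^ ((1:ℂ)/2)) = (ε:ℂ) * ((x:ℂ) ^ ((1:ℂ)/2))) :
    ‖((x:ℂ) ^ ((1:ℂ)/2))‖ ^ 2 = ε * x ∧ ε * x = |x| := by
  set s := (x:ℂ) ^ ((1:ℂ)/2) with hs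
  have h1 : ((‖s‖ ^ 2 : ℝ) : ℂ) = ((ε * x : ℝ) : ℂ) := by
    calc ((‖s‖^2 : ℝ) : ℂ) = (Complex.normSq s : ℂ) := by
          rw [Complex.normSq_eq_norm_sq]
      _ = s * (starRingEnd ℂ) s := (Complex.mul_conj s).symm
      _ = s * ((ε:ℂ) * s) := by rw [hconj]
      _ = (ε:ℂ) * (s * s) := by ring
      _ = (ε:ℂ) * (x:ℂ) := by rw [hs, sq_sqrt_c]
      _ = ((ε * x : ℝ) : ℂ) := by push_cast; ring
  have h2 : ‖s‖^2 = ε * x := Complex.ofReal_inj.mp h1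
  refine ⟨h2, ?_⟩
  have h3 : 0 ≤ ε * x := h2 ▸ sq_nonneg _
  have habs : |ε| = 1 := by rcases hε with h | h <;> rw [h] <;> simp
  calc ε * x = |ε * x| := (abs_of_nonneg h3).symm
    _ = |ε| * |x| := abs_mul _ _
    _ = |x| := by rw [habs, one_mul]

lemma exists_ne_zero_of_lt {p q : ℕ} (hpq : q < p)
    (L : (Fin p → ℂ) →ₗ[ℂ] (Fin q → ℂ)) : ∃ a : Fin p → ℂ, a ≠ 0 ∧ L a = 0 := by
  by_contra h
  push_neg at h
  have hker : ∀ a : Fin p → ℂ, L a = 0 → a = 0 := by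
    intro a ha
    by_contra ha0
    exact h a ha0 ha
  have hinj : Function.Injective L := by
    rw [← LinearMap.ker_eq_bot]
    exact LinearMap.ker_eq_bot'.mpr hker
  have hle := LinearMap.finrank_le_finrank_of_injective hinj
  simp only [Module.finrank_pi, Fintype.card_fin] at hle
  omega
end Stmt1Aux

set_option maxHeartbeats 1000000 in
/-- Theorem 2.1, lower bound. -/
theorem stmt1 (n r : ℕ) (hr : r ≤ n)
    (A E V W B : Matrix (Fin n) (Fin n) ℂ)
    (hA : A.IsHermitian) (hE : E.IsHermitian)
    (lam mu : Fin n → ℝ)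
    (hV : V ∈ Matrix.unitaryGroup (Fin n) ℂ)
    (hAeig : A = V * Matrix.diagonal (fun i => (lam i : ℂ)) * Vᴴ)
    (hord : ∀ i j : Fin n, i ≤ j → (j : ℕ) < r → lam j ≤ lam i)
    (hnz : ∀ i : Fin n, (i : ℕ) < r → lam i ≠ 0)
    (hzero : ∀ i : Fin n, r ≤ (i : ℕ) → lam i = 0)
    (hB : IsMP (V * Matrix.diagonal (fun i => ((lam i : ℂ)) ^ ((1 : ℂ)/2)) * Vᴴ) B)
    (hk : specNorm (B * E * B) ≤ 1)
    (hW : W ∈ Matrix.unitaryGroup (Fin n) ℂ)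
    (hAE : A + E = W * Matrix.diagonal (fun i => (mu i : ℂ)) * Wᴴ)
    (hmu : Antitone mu) :
    ∀ i : Fin n, (i : ℕ) < r →
      mu i ≥ lam i - specNorm (B * E * B) * |lam i| := by
  intro i hi
  have hin : (i : ℕ) < n := lt_of_lt_of_le hi hr
  have hV1 : Vᴴ * V = 1 := by
    have h := Matrix.mem_unitaryGroup_iff'.mp hV
    rwa [Matrix.star_eq_conjTranspose] at h
  have hV2 : V * Vᴴ = 1 := by
    have h := Matrix.mem_unitaryGroup_iff.mp hV
    rwa [Matrix.star_eq_conjTranspose] at h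
  have hW1 : Wᴴ * W = 1 := by
    have h := Matrix.mem_unitaryGroup_iff'.mp hW
    rwa [Matrix.star_eq_conjTranspose] at h
  have hW2 : W * Wᴴ = 1 := by
    have h := Matrix.mem_unitaryGroup_iff.mp hW
    rwa [Matrix.star_eq_conjTranspose] at h
  have hcol : ∀ X : Matrix (Fin n) (Fin n) ℂ, Vᴴ * (V * X) = X := fun X => by
    rw [← Matrix.mul_assoc, hV1, Matrix.one_mul]
  set k := specNorm (B * E * B) with hkdef
  have hk0 : 0 ≤ k := norm_nonneg _
  set s : Fin n → ℂ := fun j => ((lam j : ℂ)) ^ ((1:ℂ)/2) with hsdef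
  set t : Fin n → ℂ := fun j => (s j)⁻¹ with htdef
  have hBval : B = V * Matrix.diagonal t * Vᴴ :=
    Stmt1Aux.mp_unique _ _ _ hB (Stmt1Aux.isMP_diag hV1 s)
  choose ε hε1 hεconj using fun j => Stmt1Aux.conj_sqrt (lam j)
  have hnorm := fun j => Stmt1Aux.norm_sqrt_sq (lam j) (ε j) (hε1 j) (hεconj j)
  have hsn : ∀ j, ‖s j‖ ^ 2 = |lam j| := fun j => (hnorm j).1.trans (hnorm j).2
  set U := Vᴴ * W with hUdef
  have hU2 : U * Uᴴ = 1 := by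
    rw [hUdef, Matrix.conjTranspose_mul, Matrix.conjTranspose_conjTranspose]
    calc Vᴴ * W * (Wᴴ * V) = Vᴴ * (W * Wᴴ) * V := by noncomm_ring
      _ = 1 := by rw [hW2, Matrix.mul_one, hV1]
  -- construction of the test vector c
  set ext : (Fin ((i:ℕ)+1) → ℂ) → (Fin n → ℂ) := fun a j =>
    if h : (j:ℕ) < (i:ℕ)+1 then a ⟨(j:ℕ), h⟩ else 0 with hext
  have hext_add : ∀ a b, ext (a + b) = ext a + ext b := by
    intro a b; funext j; simp only [hext, Pi.add_apply]; split <;> simp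
  have hext_smul : ∀ (m : ℂ) a, ext (m • a) = m • (ext a) := by
    intro m a; funext j; simp only [hext, Pi.smul_apply]; split <;> simp
  set L : (Fin ((i:ℕ)+1) → ℂ) →ₗ[ℂ] (Fin (i:ℕ) → ℂ) :=
    { toFun := fun a p => (Uᴴ *ᵥ (ext a)) ⟨(p:ℕ), lt_trans p.isLt hin⟩
      map_add' := by
        intro a b
        funext p
        simp only [hext_add, Matrix.mulVec_add, Pi.add_apply]
      map_smul' := by
        intro m a
        funext p
        simp only [hext_smul, Matrix.mulVec_smul, Pi.smul_apply, RingHom.id_apply] } with hL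
  obtain ⟨a, ha0, haL⟩ := Stmt1Aux.exists_ne_zero_of_lt (Nat.lt_succ_self _) L
  set c : Fin n → ℂ := ext a with hcdef
  have hc_hi : ∀ j : Fin n, (i:ℕ) < (j:ℕ) → c j = 0 := by
    intro j hj
    simp only [hcdef, hext]
    rw [dif_neg (by omega)]
  have hc_ne : ∃ j, c j ≠ 0 := by
    obtain ⟨p, hp⟩ := Function.ne_iff.mp ha0
    refine ⟨⟨(p:ℕ), lt_of_lt_of_le p.isLt (by omega)⟩, ?_⟩
    simp only [hcdef, hext]
    rw [dif_pos p.isLt]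
    simpa using hp
  set d : Fin n → ℂ := Uᴴ *ᵥ c with hddef
  have hd_lo : ∀ j : Fin n, (j:ℕ) < (i:ℕ) → d j = 0 := by
    intro j hj
    have h0 := congrFun haL ⟨(j:ℕ), hj⟩
    exact h0
  -- the quadratic form
  have hstar_d : star d = star c ᵥ* U := by
    rw [hddef, Matrix.star_mulVec, Matrix.conjTranspose_conjTranspose]
  have term : ∀ (z : ℂ) (x : ℝ), (starRingEnd ℂ) z * ((x:ℂ) * z) = ((x * ‖z‖^2 : ℝ):ℂ) := by
    intro z x
    rw [show (starRingEnd ℂ) z * ((x:ℂ) * z) = (x:ℂ) * (z * (starRingEnd ℂ) z) by ring,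
      Complex.mul_conj, Complex.normSq_eq_norm_sq]
    push_cast
    ring
  have hMup : Vᴴ * (A + E) * V = U * Matrix.diagonal (fun j => (mu j : ℂ)) * Uᴴ := by
    rw [hAE, hUdef]
    simp only [Matrix.conjTranspose_mul, Matrix.conjTranspose_conjTranspose, Matrix.mul_assoc]
  have hq_up : star c ⬝ᵥ ((Vᴴ * (A + E) * V) *ᵥ c) = ((∑ j, mu j * ‖d j‖^2 : ℝ) : ℂ) := by
    rw [hMup,
      show (U * Matrix.diagonal (fun j => (mu j:ℂ)) * Uᴴ) *ᵥ c
        = U *ᵥ (Matrix.diagonal (fun j => (mu j:ℂ)) *ᵥ (Uᴴ *ᵥ c)) by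
          rw [Matrix.mulVec_mulVec, Matrix.mulVec_mulVec],
      Matrix.dotProduct_mulVec, ← hstar_d, ← hddef]
    push_cast
    simp only [dotProduct, Pi.star_apply]
    refine Finset.sum_congr rfl fun j _ => ?_
    rw [Matrix.mulVec_diagonal]
    have := term (d j) (mu j)
    push_cast at this
    exact this
  have hS_cd : (∑ j, ‖d j‖^2) = ∑ j, ‖c j‖^2 := by
    have h1 : star d ⬝ᵥ d = star c ⬝ᵥ c := by
      rw [hstar_d, hddef, ← Matrix.dotProduct_mulVec, Matrix.mulVec_mulVec, hU2,
        Matrix.one_mulVec]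
    exact Complex.ofReal_inj.mp
      (by rw [← Stmt1Aux.dot_star_self, h1, Stmt1Aux.dot_star_self])
  set F := Vᴴ * E * V with hFdef
  have hAV : Vᴴ * A * V = Matrix.diagonal (fun j => (lam j:ℂ)) := by
    rw [hAeig]
    calc Vᴴ * (V * Matrix.diagonal (fun j => (lam j:ℂ)) * Vᴴ) * V
        = (Vᴴ * V) * Matrix.diagonal (fun j => (lam j:ℂ)) * (Vᴴ * V) := by noncomm_ring
      _ = Matrix.diagonal (fun j => (lam j:ℂ)) := by
          rw [hV1, Matrix.one_mul, Matrix.mul_one]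
  have hsplit : Vᴴ * (A + E) * V = Matrix.diagonal (fun j => (lam j:ℂ)) + F := by
    rw [Matrix.mul_add, Matrix.add_mul, hAV, hFdef]
  set w : ℂ := star c ⬝ᵥ (F *ᵥ c) with hwdef
  have hq_low_eq : ((∑ j, mu j * ‖d j‖^2 : ℝ):ℂ)
      = ((∑ j, lam j * ‖c j‖^2 : ℝ):ℂ) + w := by
    rw [← hq_up, hsplit, Matrix.add_mulVec, dotProduct_add, hwdef]
    congr 1
    push_cast
    simp only [dotProduct, Pi.star_apply]
    refine Finset.sum_congr rfl fun j _ => ?_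
    rw [Matrix.mulVec_diagonal]
    have := term (c j) (lam j)
    push_cast at this
    exact this
  -- the error bound
  set e : Fin n → ℂ := fun j => c j * s j with hedef
  set y' : Fin n → ℂ := fun j => ((ε j : ℝ):ℂ) * e j with hy'def
  have hce : ∀ j, c j = t j * e j := by
    intro j
    by_cases hl : lam j = 0
    · have hjr : r ≤ (j:ℕ) := by
        by_contra hjr
        exact hnz j (by omega) hl
      have hij : (i:ℕ) < (j:ℕ) := lt_of_lt_of_le hi hjr
      have hcj : c j = 0 := hc_hi j hij
      simp [hedef, hcj]
    · have hsne : s j ≠ 0 := by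
        rw [hsdef]
        simpa using (fun h => hl ((Stmt1Aux.sqrt_c_eq_zero_iff (lam j)).mp h))
      rw [hedef, htdef]
      field_simp
  have hεinv : ∀ j, ((ε j : ℝ):ℂ)⁻¹ = ((ε j : ℝ):ℂ) := by
    intro j
    rcases hε1 j with h | h <;> rw [h] <;> norm_num
  have hconjs : ∀ j, (starRingEnd ℂ) (s j) = ((ε j : ℝ):ℂ) * s j := hεconj
  have hstarc : ∀ j, (star c) j = t j * ((star y') j) := by
    intro j
    show (starRingEnd ℂ) (c j) = (s j)⁻¹ * (starRingEnd ℂ) (((ε j:ℝ):ℂ) * (c j * s j))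
    by_cases hs0 : s j = 0
    · have hc0 : c j = 0 := by
        rw [hce j]
        show (s j)⁻¹ * e j = 0
        rw [hs0]
        simp
      rw [hc0]
      simp
    · have hε2 : ((ε j:ℝ):ℂ) * ((ε j:ℝ):ℂ) = 1 := by
        rcases hε1 j with h | h <;> rw [h] <;> norm_num
      rw [_root_.map_mul, _root_.map_mul, Complex.conj_ofReal, hconjs j]
      rw [show (s j)⁻¹ * (((ε j:ℝ):ℂ) * ((starRingEnd ℂ) (c j) * (((ε j:ℝ):ℂ) * s j)))
          = (((ε j:ℝ):ℂ) * ((ε j:ℝ):ℂ)) * ((s j)⁻¹ * s j) * (starRingEnd ℂ) (c j) from by ring,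
        hε2, inv_mul_cancel₀ hs0, one_mul, one_mul]
  have hc_vec : c = Matrix.diagonal t *ᵥ e := by
    funext j
    rw [Matrix.mulVec_diagonal]
    exact hce j
  have hw_eq : w = star y' ⬝ᵥ ((Matrix.diagonal t * F * Matrix.diagonal t) *ᵥ e) := by
    rw [show (Matrix.diagonal t * F * Matrix.diagonal t) *ᵥ e
        = Matrix.diagonal t *ᵥ (F *ᵥ (Matrix.diagonal t *ᵥ e)) by
          rw [Matrix.mulVec_mulVec, Matrix.mulVec_mulVec],
      ← hc_vec, hwdef]
    simp only [dotProduct]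
    refine Finset.sum_congr rfl fun j _ => ?_
    rw [Matrix.mulVec_diagonal, hstarc j]
    simp only [Pi.star_apply]
    ring
  have hBEB : B * E * B = V * (Matrix.diagonal t * F * Matrix.diagonal t) * Vᴴ := by
    rw [hBval, hFdef]
    simp only [Matrix.mul_assoc, hcol]
  have hw_mat : star (V *ᵥ y') ⬝ᵥ ((B * E * B) *ᵥ (V *ᵥ e))
      = star y' ⬝ᵥ ((Matrix.diagonal t * F * Matrix.diagonal t) *ᵥ e) := by
    rw [hBEB, Matrix.star_mulVec, Matrix.mulVec_mulVec, ← Matrix.dotProduct_mulVec,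
      Matrix.mulVec_mulVec]
    have hred : Vᴴ * (V * (Matrix.diagonal t * F * Matrix.diagonal t) * Vᴴ * V)
        = Matrix.diagonal t * F * Matrix.diagonal t := by
      calc Vᴴ * (V * (Matrix.diagonal t * F * Matrix.diagonal t) * Vᴴ * V)
          = (Vᴴ * V) * (Matrix.diagonal t * F * Matrix.diagonal t) * (Vᴴ * V) := by noncomm_ring
        _ = Matrix.diagonal t * F * Matrix.diagonal t := by
            rw [hV1, Matrix.one_mul, Matrix.mul_one]
    rw [hred]
  have hVnorm : ∀ x : Fin n → ℂ, (∑ j, ‖(V *ᵥ x) j‖^2) = ∑ j, ‖x j‖^2 := by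
    intro x
    have h1 : star (V *ᵥ x) ⬝ᵥ (V *ᵥ x) = star x ⬝ᵥ x := by
      rw [Matrix.star_mulVec, ← Matrix.dotProduct_mulVec, Matrix.mulVec_mulVec, hV1,
        Matrix.one_mulVec]
    exact Complex.ofReal_inj.mp
      (by rw [← Stmt1Aux.dot_star_self, h1, Stmt1Aux.dot_star_self])
  have he_norm : ∀ j, ‖e j‖^2 = |lam j| * ‖c j‖^2 := by
    intro j
    rw [hedef]
    simp only [norm_mul, mul_pow, hsn j]
    ring
  have hy'_norm : ∀ j, ‖y' j‖^2 = ‖e j‖^2 := by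
    intro j
    rw [hy'def]
    simp only [norm_mul, mul_pow, Complex.norm_real]
    have : ‖ε j‖ = 1 := by rcases hε1 j with h | h <;> rw [h] <;> simp
    rw [this]
    ring
  have hwb : ‖w‖ ≤ k * ∑ j, |lam j| * ‖c j‖^2 := by
    rw [hw_eq, ← hw_mat]
    have hb := Stmt1Aux.specNorm_bound (B * E * B) (V *ᵥ y') (V *ᵥ e)
    rw [← hkdef] at hb
    refine hb.trans ?_
    rw [hVnorm, hVnorm]
    have h1 : (∑ j, ‖y' j‖^2) = ∑ j, |lam j| * ‖c j‖^2 := by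
      refine Finset.sum_congr rfl fun j _ => ?_
      rw [hy'_norm j, he_norm j]
    have h2 : (∑ j, ‖e j‖^2) = ∑ j, |lam j| * ‖c j‖^2 := by
      refine Finset.sum_congr rfl fun j _ => he_norm j
    rw [h1, h2, Real.mul_self_sqrt]
    exact Finset.sum_nonneg fun j _ => mul_nonneg (abs_nonneg _) (sq_nonneg _)
  -- real chain
  set S := ∑ j, ‖c j‖^2 with hSdef
  have hS_pos : 0 < S := by
    obtain ⟨j0, hj0⟩ := hc_ne
    refine Finset.sum_pos' (fun j _ => sq_nonneg _) ⟨j0, Finset.mem_univ _, ?_⟩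
    exact pow_pos (norm_pos_iff.mpr hj0) 2
  have hre : (∑ j, mu j * ‖d j‖^2) = (∑ j, lam j * ‖c j‖^2) + w.re := by
    have h := congrArg Complex.re hq_low_eq
    rwa [Complex.add_re, Complex.ofReal_re, Complex.ofReal_re] at h
  have hwre : -‖w‖ ≤ w.re := by
    have h1 : |w.re| ≤ ‖w‖ := Complex.abs_re_le_norm w
    cases abs_le.mp h1 with
    | intro h2 h3 => linarith
  have hq_low : (lam i - k * |lam i|) * S ≤ ∑ j, mu j * ‖d j‖^2 := by
    rw [hre]
    have hstep : (lam i - k * |lam i|) * S ≤ ∑ j, (lam j - k * |lam j|) * ‖c j‖^2 := by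
      rw [hSdef, Finset.mul_sum]
      refine Finset.sum_le_sum fun j _ => ?_
      by_cases hj : (i:ℕ) < (j:ℕ)
      · rw [hc_hi j hj]
        simp
      · have hji : j ≤ i := by
          rw [Fin.le_def]; omega
        have hlam : lam i ≤ lam j := hord j i hji hi
        have habs : |lam j| - |lam i| ≤ lam j - lam i := by
          have := abs_sub_abs_le_abs_sub (lam j) (lam i)
          rwa [abs_of_nonneg (by linarith : (0:ℝ) ≤ lam j - lam i)] at this
        have h2 : k * (|lam j| - |lam i|) ≤ k * (lam j - lam i) :=
          mul_le_mul_of_nonneg_left habs hk0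
        have h3 : k * (lam j - lam i) ≤ lam j - lam i := by nlinarith
        refine mul_le_mul_of_nonneg_right (by linarith) (sq_nonneg _)
    have hsum : ∑ j, (lam j - k * |lam j|) * ‖c j‖^2
        = (∑ j, lam j * ‖c j‖^2) - k * ∑ j, |lam j| * ‖c j‖^2 := by
      rw [Finset.mul_sum, ← Finset.sum_sub_distrib]
      refine Finset.sum_congr rfl fun j _ => by ring
    rw [hsum] at hstep
    have : -(k * ∑ j, |lam j| * ‖c j‖^2) ≤ w.re := by
      refine le_trans ?_ hwre
      simp only [neg_le_neg_iff]
      exact hwb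
    linarith
  have hq_hi2 : ∑ j, mu j * ‖d j‖^2 ≤ mu i * S := by
    have h1 : mu i * S = mu i * ∑ j, ‖d j‖^2 := by rw [hS_cd]
    rw [h1, Finset.mul_sum]
    refine Finset.sum_le_sum fun j _ => ?_
    by_cases hj : (j:ℕ) < (i:ℕ)
    · rw [hd_lo j hj]
      simp
    · have hij : i ≤ j := by rw [Fin.le_def]; omega
      exact mul_le_mul_of_nonneg_right (hmu hij) (sq_nonneg _)
  have hfin : (lam i - k * |lam i|) * S ≤ mu i * S := le_trans hq_low hq_hi2
  have := le_of_mul_le_mul_right hfin hS_pos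
  linarith
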